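/- arXiv:1505.01047 — 2 statements merged into one kernel-verified Lean document; each statement's English description precedes it below -/
import Mathlib

section
/- Let m ∈ ℤ_{>0} and s ∈ ℤ. For every τ with Im τ > 0 and all z₁, z₂ ∈ ℂ with z₁ ∉ ℤ + ℤτ, one has Φ̃^{[m;s]}(τ + 1, z₁, z₂) = Φ̃^{[m;s]}(τ, z₁, z₂). -/
noncomputable section

open Complex

/-- `mexp w = e^{2πi w}`. -/
def mexp (w : ℂ) : ℂ := Complex.exp (2 * (Real.pi : ℂ) * Complex.I * w)

/-- The signed mock theta function `Φ^{sgn[m;s]}(τ,z₁,z₂)`. -/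
def PhiS (sgn : ℂ) (m s : ℝ) (τ z₁ z₂ : ℂ) : ℂ :=
  ∑' n : ℤ, sgn ^ n *
    mexp ((m : ℂ) * n * (z₁ + z₂) + (s : ℂ) * z₁ + τ * ((m : ℂ) * n ^ 2 + (s : ℂ) * n)) /
    (1 - mexp (z₁ + n * τ))

/-- The signed theta function `Θ^{sgn}_{j,m}(τ,z)`. -/
def ThetaS (sgn : ℂ) (j m : ℝ) (τ z : ℂ) : ℂ :=
  ∑' n : ℤ, sgn ^ n *
    mexp ((m : ℂ) * z * ((n : ℂ) + ((j / (2 * m) : ℝ) : ℂ)) +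
      τ * (m : ℂ) * ((n : ℂ) + ((j / (2 * m) : ℝ) : ℂ)) ^ 2)

/-- `E(x) = 2∫₀ˣ e^{-πu²} du`. -/
def Efun (x : ℝ) : ℝ := 2 * ∫ u in (0:ℝ)..x, Real.exp (-Real.pi * u ^ 2)

/-- `ψ_{m,n}(τ,z) = (n - 2m Im z / Im τ) √(Im τ / m)`. -/
def psiMN (m n : ℝ) (τ z : ℂ) : ℝ := (n - 2 * m * z.im / τ.im) * Real.sqrt (τ.im / m)

/-- The real-analytic correction `R^{sgn}_{j,m}(τ,z)`; the summation variable `n ∈ j + 2mℤ`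
is written as `n = j + 2mk`, `k ∈ ℤ`, so that `(±1)^{(n-j)/(2m)} = sgn^k`. -/
def RS (sgn : ℂ) (j m : ℝ) (τ z : ℂ) : ℂ :=
  ∑' k : ℤ, sgn ^ k *
    (((Real.sign (j + 2 * m * k - 1 / 2 - j + 2 * m) -
        Efun (psiMN m (j + 2 * m * k) τ z) : ℝ)) : ℂ) *
    Complex.exp (-(Real.pi : ℂ) * Complex.I * (((j + 2 * m * k : ℝ)) : ℂ) ^ 2 * τ / (2 * (m : ℂ))
      + 2 * (Real.pi : ℂ) * Complex.I * (((j + 2 * m * k : ℝ)) : ℂ) * z)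

/-- The modifier `Φ^{sgn[m;s]}_add`; the summation variable `j ∈ s + ℤ`, `s ≤ j < s + 2m`
is written as `j = s + i`, `0 ≤ i < ⌈2m⌉`. -/
def PhiAddS (sgn : ℂ) (m s : ℝ) (τ z₁ z₂ : ℂ) : ℂ :=
  ∑ i ∈ Finset.range ⌈2 * m⌉₊,
    RS sgn (s + i) m τ ((z₁ - z₂) / 2) * ThetaS sgn (s + i) m τ (z₁ + z₂)

/-- The modified (signed) mock theta function `Φ̃^{sgn[m;s]}`. -/
def PhiTilde (sgn : ℂ) (m s : ℝ) (τ z₁ z₂ : ℂ) : ℂ :=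
  PhiS sgn m s τ z₁ z₂ - (1 / 2) * PhiAddS sgn m s τ z₁ z₂

end

lemma mexp_add' (a b : ℂ) : mexp (a + b) = mexp a * mexp b := by
  simp [mexp, mul_add, Complex.exp_add]

lemma mexp_int' (k : ℤ) : mexp (k : ℂ) = 1 := by
  rw [mexp, show 2*(Real.pi:ℂ)*Complex.I*(k:ℂ) = (k:ℂ)*(2*(Real.pi:ℂ)*Complex.I) by ring,
    Complex.exp_int_mul_two_pi_mul_I]

lemma mexp_add_int (w : ℂ) (k : ℤ) : mexp (w + (k : ℂ)) = mexp w := by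
  rw [mexp_add', mexp_int', mul_one]

lemma RS_T (m s : ℤ) (hm : 0 < m) (i : ℕ) (τ z : ℂ) :
    RS 1 ((s:ℝ) + i) (m:ℝ) (τ + 1) z
      = mexp (-(((s + i : ℤ)):ℂ)^2 / (4 * (m:ℂ))) * RS 1 ((s:ℝ) + i) (m:ℝ) τ z := by
  have hm0 : (m:ℂ) ≠ 0 := by exact_mod_cast hm.ne'
  set J : ℤ := s + i with hJ
  rw [RS, RS, ← tsum_mul_left]
  apply tsum_congr
  intro k
  have hpsi : psiMN (m:ℝ) ((s:ℝ) + i + 2 * m * k) (τ + 1) z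
      = psiMN (m:ℝ) ((s:ℝ) + i + 2 * m * k) τ z := by
    simp [psiMN]
  have hn : ((((s:ℝ) + i + 2 * (m:ℝ) * (k:ℤ)) : ℝ) : ℂ) = (J:ℂ) + 2 * (m:ℂ) * (k:ℂ) := by
    push_cast [hJ]; ring
  have hE : -(Real.pi:ℂ) * Complex.I * ((((s:ℝ) + i + 2 * (m:ℝ) * (k:ℤ)) : ℝ) : ℂ) ^ 2 * (τ + 1)
        / (2 * (((m:ℝ)):ℂ))
      + 2 * (Real.pi:ℂ) * Complex.I * ((((s:ℝ) + i + 2 * (m:ℝ) * (k:ℤ)) : ℝ) : ℂ) * z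
      = 2 * (Real.pi:ℂ) * Complex.I * (-(J:ℂ)^2 / (4 * (m:ℂ)))
      + (-(Real.pi:ℂ) * Complex.I * ((((s:ℝ) + i + 2 * (m:ℝ) * (k:ℤ)) : ℝ) : ℂ) ^ 2 * τ
          / (2 * (((m:ℝ)):ℂ))
        + 2 * (Real.pi:ℂ) * Complex.I * ((((s:ℝ) + i + 2 * (m:ℝ) * (k:ℤ)) : ℝ) : ℂ) * z)
      + ((-(J * k + m * k ^ 2) : ℤ) : ℂ) * (2 * (Real.pi:ℂ) * Complex.I) := by
    rw [hn]
    push_cast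
    field_simp
    ring
  rw [hpsi, hE, Complex.exp_add, Complex.exp_add, Complex.exp_int_mul_two_pi_mul_I, mul_one]
  rw [show Complex.exp (2 * (Real.pi:ℂ) * Complex.I * (-(J:ℂ)^2 / (4 * (m:ℂ))))
      = mexp (-(J:ℂ)^2 / (4 * (m:ℂ))) from rfl]
  ring

lemma Theta_T (m s : ℤ) (hm : 0 < m) (i : ℕ) (τ z : ℂ) :
    ThetaS 1 ((s:ℝ) + i) (m:ℝ) (τ + 1) z
      = mexp ((((s + i : ℤ)):ℂ)^2 / (4 * (m:ℂ))) * ThetaS 1 ((s:ℝ) + i) (m:ℝ) τ z := by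
  have hm0 : (m:ℂ) ≠ 0 := by exact_mod_cast hm.ne'
  set J : ℤ := s + i with hJ
  rw [ThetaS, ThetaS, ← tsum_mul_left]
  apply tsum_congr
  intro n
  have hq : (((((s:ℝ) + i) / (2 * (m:ℝ))) : ℝ) : ℂ) = (J:ℂ) / (2 * (((m:ℝ)):ℂ)) := by
    push_cast [hJ]; ring
  rw [hq]
  have hE : (((m:ℝ)):ℂ) * z * ((n:ℂ) + (J:ℂ) / (2 * (((m:ℝ)):ℂ)))
        + (τ + 1) * (((m:ℝ)):ℂ) * ((n:ℂ) + (J:ℂ) / (2 * (((m:ℝ)):ℂ))) ^ 2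
      = (((((m:ℝ)):ℂ) * z * ((n:ℂ) + (J:ℂ) / (2 * (((m:ℝ)):ℂ)))
          + τ * (((m:ℝ)):ℂ) * ((n:ℂ) + (J:ℂ) / (2 * (((m:ℝ)):ℂ))) ^ 2)
        + ((m * n ^ 2 + J * n : ℤ) : ℂ)) + (J:ℂ)^2 / (4 * (m:ℂ)) := by
    push_cast
    field_simp
    ring
  rw [hE, mexp_add', mexp_add_int]
  ring

/-- T-invariance of the modified mock theta function `Φ̃^{[m;s]}`,
`m ∈ ℤ_{>0}`, `s ∈ ℤ`. -/
theorem stmt1 (m s : ℤ) (hm : 0 < m) (τ z₁ z₂ : ℂ) (hτ : 0 < τ.im)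
    (hz : ∀ a b : ℤ, z₁ ≠ (a : ℂ) + (b : ℂ) * τ) :
    PhiTilde 1 (m : ℝ) (s : ℝ) (τ + 1) z₁ z₂ = PhiTilde 1 (m : ℝ) (s : ℝ) τ z₁ z₂ := by
  unfold PhiTilde
  congr 1
  · -- PhiS part
    rw [PhiS, PhiS]
    apply tsum_congr
    intro n
    have h1 : (((m:ℝ)):ℂ) * n * (z₁ + z₂) + (((s:ℝ)):ℂ) * z₁ + (τ + 1) * ((((m:ℝ)):ℂ) * n ^ 2 + (((s:ℝ)):ℂ) * n)
        = ((((m:ℝ)):ℂ) * n * (z₁ + z₂) + (((s:ℝ)):ℂ) * z₁ + τ * ((((m:ℝ)):ℂ) * n ^ 2 + (((s:ℝ)):ℂ) * n))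
          + ((m * n ^ 2 + s * n : ℤ) : ℂ) := by push_cast; ring
    have h2 : z₁ + (n:ℂ) * (τ + 1) = (z₁ + (n:ℂ) * τ) + ((n : ℤ) : ℂ) := by push_cast; ring
    rw [h1, h2, mexp_add_int, mexp_add_int]
  · -- PhiAddS part
    congr 1
    rw [PhiAddS, PhiAddS]
    apply Finset.sum_congr rfl
    intro i _
    rw [RS_T m s hm i, Theta_T m s hm i]
    have hone : mexp (-(((s + i : ℤ)):ℂ)^2 / (4 * (m:ℂ)))
        * mexp ((((s + i : ℤ)):ℂ)^2 / (4 * (m:ℂ))) = 1 := by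
      rw [← mexp_add',
        show -(((s + i : ℤ)):ℂ)^2 / (4 * (m:ℂ)) + (((s + i : ℤ)):ℂ)^2 / (4 * (m:ℂ)) = 0 by ring]
      simp [mexp]
    calc mexp (-(((s + i : ℤ)):ℂ)^2 / (4 * (m:ℂ))) * RS 1 ((s:ℝ) + i) (m:ℝ) τ ((z₁ - z₂) / 2)
          * (mexp ((((s + i : ℤ)):ℂ)^2 / (4 * (m:ℂ))) * ThetaS 1 ((s:ℝ) + i) (m:ℝ) τ (z₁ + z₂))
        = (mexp (-(((s + i : ℤ)):ℂ)^2 / (4 * (m:ℂ)))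
            * mexp ((((s + i : ℤ)):ℂ)^2 / (4 * (m:ℂ))))
          * (RS 1 ((s:ℝ) + i) (m:ℝ) τ ((z₁ - z₂) / 2)
            * ThetaS 1 ((s:ℝ) + i) (m:ℝ) τ (z₁ + z₂)) := by ring
      _ = _ := by rw [hone, one_mul]
end

section
/- Let m ∈ (1/2)ℤ_{>0} and s ∈ (1/2)ℤ. For every τ with Im τ > 0 and all z₁, z₂ ∈ ℂ with z₁ ∉ ℤ + ℤτ: (a) Φ^{±[m;s]}(τ, z₁, z₂) − e^{4πi m z₁} Φ^{±[m;s]}(τ, z₁, z₂ + 2τ) = Σ_{k ∈ ℤ, 0 ≤ k < 2m} e^{πi(k+s)(z₁−z₂)} q^{−(k+s)²/(4m)} Θ^{±}_{k+s, m}(τ, z₁ + z₂); and (b) Φ^{±[m;s]}(τ, z₁, z₂) − e^{−4πi m z₂} Φ^{±[m;s]}(τ, z₁ − 2τ, z₂) equals the same right-hand side. -/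
/-!
Write `x_n = e^{2πi(z₁ + nτ)}`. The numerator of the `n`-th term of
`e^{4πimz₁} Φ(τ, z₁, z₂ + 2τ)` is that of `Φ(τ, z₁, z₂)` times `x_n^{2m}`, so the `n`-th term
of the difference in (a) is the numerator times the geometric sum `∑_{k<2m} x_n^k`. Completing
the square in `n` turns the `k`-th part, summed over `n`, into the theta series `Θ_{k+s,m}`.
Identity (b) reduces to (a): reindexing `n ↦ n + 2` (which fixes `(±1)^n`) shows
`e^{-4πimz₂} Φ(τ, z₁ - 2τ, z₂) = e^{4πimz₁} Φ(τ, z₁, z₂ + 2τ)`.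
-/

noncomputable section

open Complex Filter Topology Asymptotics

namespace MockTheta

lemma mexp_add (a b : ℂ) : mexp (a + b) = mexp a * mexp b := by
  rw [mexp, mexp, mexp, ← Complex.exp_add]; ring_nf

lemma mexp_pow (a : ℂ) (k : ℕ) : mexp a ^ k = mexp (k * a) := by
  rw [mexp, mexp, ← Complex.exp_nat_mul]; ring_nf

lemma mexp_neg (a : ℂ) : mexp (-a) = (mexp a)⁻¹ := by
  rw [mexp, mexp, ← Complex.exp_neg]; ring_nf

lemma norm_mexp (a : ℂ) : ‖mexp a‖ = Real.exp (-(2 * Real.pi * a.im)) := by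
  simp [mexp, Complex.norm_exp, Complex.mul_re]

lemma mexp_eq_one_iff {a : ℂ} : mexp a = 1 ↔ ∃ k : ℤ, a = k := by
  have h2πI : (2 * (Real.pi : ℂ) * I) ≠ 0 := by simp [Real.pi_ne_zero]
  simp only [mexp, Complex.exp_eq_one_iff]
  refine exists_congr fun k => ?_
  rw [mul_comm (k : ℂ)]
  exact mul_right_inj' h2πI

lemma one_sub_mexp_ne_zero {τ z₁ : ℂ} (hz : ∀ a b : ℤ, z₁ ≠ (a : ℂ) + (b : ℂ) * τ) (n : ℤ) :
    1 - mexp (z₁ + n * τ) ≠ 0 := by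
  rw [sub_ne_zero, ne_comm, Ne, mexp_eq_one_iff]
  rintro ⟨k, hk⟩
  exact hz k (-n) (by push_cast; linear_combination hk)

lemma tendsto_mexp_add_int_mul_atTop {τ : ℂ} (hτ : 0 < τ.im) (w : ℂ) :
    Tendsto (fun n : ℤ => mexp (w + n * τ)) atTop (𝓝 0) := by
  rw [tendsto_zero_iff_norm_tendsto_zero]
  simp only [norm_mexp, add_im, mul_im, intCast_re, intCast_im, zero_mul, add_zero]
  refine Real.tendsto_exp_atBot.comp ?_
  have hlin : Tendsto (fun n : ℤ => w.im + n * τ.im) atTop atTop :=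
    tendsto_atTop_add_const_left _ _ (tendsto_intCast_atTop_atTop.atTop_mul_const hτ)
  exact tendsto_neg_atTop_atBot.comp (hlin.const_mul_atTop (by positivity))

lemma isBigO_inv_one_sub_mexp {τ : ℂ} (hτ : 0 < τ.im) (z₁ : ℂ) :
    (fun n : ℤ => (1 - mexp (z₁ + n * τ))⁻¹) =O[cofinite] (fun _ => (1 : ℂ)) := by
  rw [Int.cofinite_eq]
  refine IsBigO.sup ?_ ?_
  · have hy : Tendsto (fun n : ℤ => mexp (-(z₁ + n * τ))) atBot (𝓝 0) := by
      refine ((tendsto_mexp_add_int_mul_atTop hτ (-z₁)).comp tendsto_neg_atBot_atTop).congr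
        fun n => ?_
      simp only [Function.comp_apply, Int.cast_neg]
      ring_nf
    have hlim := hy.div (hy.sub_const 1) (by norm_num)
    rw [zero_div] at hlim
    refine (hlim.congr fun n => ?_).isBigO_one ℂ
    have hx : mexp (z₁ + n * τ) ≠ 0 := Complex.exp_ne_zero _
    change mexp (-(z₁ + n * τ)) / (mexp (-(z₁ + n * τ)) - 1) = _
    rw [mexp_neg, ← one_div, div_sub_one hx, div_div_div_cancel_right₀ hx, one_div]
  · have hx := tendsto_mexp_add_int_mul_atTop hτ z₁
    have hlim := (tendsto_const_nhds (x := (1 : ℂ))).sub hx |>.inv₀ (by norm_num)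
    exact hlim.isBigO_one ℂ

/-- `sgn ^ n = exp (n log sgn)` is absorbed into the linear term of a Jacobi theta summand. -/
lemma summable_zpow_mul_mexp_quadratic {sgn : ℂ} (hsgn : sgn ≠ 0) {c : ℂ} (hc : 0 < c.im)
    (a b : ℂ) : Summable fun n : ℤ => sgn ^ n * mexp (c * n ^ 2 + a * n + b) := by
  have h2πI : (2 * (Real.pi : ℂ) * I) ≠ 0 := by simp [Real.pi_ne_zero]
  have hθ := (summable_jacobiTheta₂_term_iff (a + Complex.log sgn / (2 * Real.pi * I)) (2 * c)).mpr
    (by simpa using hc)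
  refine (hθ.mul_left (mexp b)).congr fun n => ?_
  rw [jacobiTheta₂_term, mexp, mexp, ← Complex.exp_log hsgn, ← Complex.exp_int_mul,
    ← Complex.exp_add, ← Complex.exp_add, Complex.exp_log hsgn]
  congr 1
  field_simp
  ring

def phiNum (sgn : ℂ) (m s : ℝ) (τ z₁ z₂ : ℂ) (n : ℤ) : ℂ :=
  sgn ^ n * mexp ((m : ℂ) * n * (z₁ + z₂) + (s : ℂ) * z₁ + τ * ((m : ℂ) * n ^ 2 + (s : ℂ) * n))

def thetaTerm (sgn : ℂ) (j m : ℝ) (τ z : ℂ) (n : ℤ) : ℂ :=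
  sgn ^ n * mexp ((m : ℂ) * z * ((n : ℂ) + ((j / (2 * m) : ℝ) : ℂ)) +
    τ * (m : ℂ) * ((n : ℂ) + ((j / (2 * m) : ℝ) : ℂ)) ^ 2)

lemma PhiS_eq_tsum (sgn : ℂ) (m s : ℝ) (τ z₁ z₂ : ℂ) :
    PhiS sgn m s τ z₁ z₂ = ∑' n : ℤ, phiNum sgn m s τ z₁ z₂ n / (1 - mexp (z₁ + n * τ)) :=
  rfl

lemma ThetaS_eq_tsum (sgn : ℂ) (j m : ℝ) (τ z : ℂ) :
    ThetaS sgn j m τ z = ∑' n : ℤ, thetaTerm sgn j m τ z n :=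
  rfl

lemma im_ofReal_mul_pos {m : ℝ} (hm : 0 < m) {τ : ℂ} (hτ : 0 < τ.im) : 0 < ((m : ℂ) * τ).im := by
  simpa using mul_pos hm hτ

lemma summable_phiNum {sgn : ℂ} (hsgn : sgn ≠ 0) {m : ℝ} (hm : 0 < m) (s : ℝ) {τ : ℂ}
    (hτ : 0 < τ.im) (z₁ z₂ : ℂ) : Summable (phiNum sgn m s τ z₁ z₂) := by
  refine (summable_zpow_mul_mexp_quadratic hsgn (im_ofReal_mul_pos hm hτ)
    ((m : ℂ) * (z₁ + z₂) + s * τ) (s * z₁)).congr fun n => ?_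
  rw [phiNum]
  ring_nf

lemma summable_thetaTerm {sgn : ℂ} (hsgn : sgn ≠ 0) (j : ℝ) {m : ℝ} (hm : 0 < m) {τ : ℂ}
    (hτ : 0 < τ.im) (z : ℂ) : Summable (thetaTerm sgn j m τ z) := by
  obtain ⟨a, ha⟩ : ∃ a : ℂ, a = ((j / (2 * m) : ℝ) : ℂ) := ⟨_, rfl⟩
  refine (summable_zpow_mul_mexp_quadratic hsgn (im_ofReal_mul_pos hm hτ)
    ((m : ℂ) * z + 2 * τ * m * a) (m * z * a + τ * m * a ^ 2)).congr fun n => ?_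
  rw [thetaTerm, ← ha]
  ring_nf

lemma summable_phiNum_div {sgn : ℂ} (hsgn : sgn ≠ 0) {m : ℝ} (hm : 0 < m) (s : ℝ) {τ : ℂ}
    (hτ : 0 < τ.im) (z₁ z₂ : ℂ) :
    Summable fun n : ℤ => phiNum sgn m s τ z₁ z₂ n / (1 - mexp (z₁ + n * τ)) := by
  refine summable_of_isBigO' (summable_phiNum hsgn hm s hτ z₁ z₂) ?_
  simpa only [div_eq_mul_inv, mul_one] using
    (isBigO_refl (phiNum sgn m s τ z₁ z₂) _).mul (isBigO_inv_one_sub_mexp hτ z₁)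

/-- Completing the square `m n² + (k + s) n = m (n + (k + s)/(2m))² - (k + s)²/(4m)`. -/
lemma phiNum_mul_mexp_pow {m : ℝ} (hm : m ≠ 0) (sgn : ℂ) (s : ℝ) (τ z₁ z₂ : ℂ) (k : ℕ)
    (n : ℤ) :
    phiNum sgn m s τ z₁ z₂ n * mexp (z₁ + n * τ) ^ k =
      Complex.exp ((Real.pi : ℂ) * I * ((k : ℂ) + s) * (z₁ - z₂)) *
        mexp (τ * (-(((k : ℂ) + s) ^ 2 / (4 * m)))) *
        thetaTerm sgn ((k : ℝ) + s) m τ (z₁ + z₂) n := by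
  have hmC : (m : ℂ) ≠ 0 := Complex.ofReal_ne_zero.mpr hm
  have hpre : Complex.exp ((Real.pi : ℂ) * I * ((k : ℂ) + s) * (z₁ - z₂)) =
      mexp (((k : ℂ) + s) * (z₁ - z₂) / 2) := by
    rw [mexp]; ring_nf
  have hexp : (m : ℂ) * n * (z₁ + z₂) + s * z₁ + τ * (m * n ^ 2 + s * n) + k * (z₁ + n * τ) =
      ((k : ℂ) + s) * (z₁ - z₂) / 2 + τ * (-(((k : ℂ) + s) ^ 2 / (4 * m))) +
        ((m : ℂ) * (z₁ + z₂) * ((n : ℂ) + (((k + s) / (2 * m) : ℝ) : ℂ)) +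
          τ * m * ((n : ℂ) + (((k + s) / (2 * m) : ℝ) : ℂ)) ^ 2) := by
    push_cast
    field_simp
    ring
  rw [phiNum, thetaTerm, hpre, mul_assoc, mexp_pow, ← mexp_add, hexp, mexp_add, mexp_add]
  ring

lemma mexp_mul_phiNum_add_two_mul {m : ℝ} {M : ℕ} (hM : (M : ℝ) = 2 * m) (sgn : ℂ) (s : ℝ)
    (τ z₁ z₂ : ℂ) (n : ℤ) :
    mexp (2 * m * z₁) * phiNum sgn m s τ z₁ (z₂ + 2 * τ) n =
      phiNum sgn m s τ z₁ z₂ n * mexp (z₁ + n * τ) ^ M := by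
  have hMC : (M : ℂ) = 2 * m := by exact_mod_cast hM
  rw [phiNum, phiNum, mexp_pow, hMC, mul_left_comm, ← mexp_add, mul_assoc (sgn ^ n), ← mexp_add]
  ring_nf

lemma phiNum_div_sub_mexp_mul_phiNum_div {m : ℝ} {M : ℕ} (hM : (M : ℝ) = 2 * m) (sgn : ℂ)
    (s : ℝ) {τ z₁ : ℂ} (n : ℤ) (hden : 1 - mexp (z₁ + n * τ) ≠ 0) (z₂ : ℂ) :
    phiNum sgn m s τ z₁ z₂ n / (1 - mexp (z₁ + n * τ)) -
        mexp (2 * m * z₁) * (phiNum sgn m s τ z₁ (z₂ + 2 * τ) n / (1 - mexp (z₁ + n * τ))) =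
      ∑ k ∈ Finset.range M, phiNum sgn m s τ z₁ z₂ n * mexp (z₁ + n * τ) ^ k := by
  rw [← mul_div_assoc, mexp_mul_phiNum_add_two_mul hM, ← sub_div, ← mul_one_sub,
    ← Finset.mul_sum, div_eq_iff hden, mul_assoc, geom_sum_mul_neg]

theorem PhiS_sub_mexp_mul_PhiS_add_two_mul {sgn : ℂ} (hsgn : sgn ≠ 0) {m : ℝ} (hm : 0 < m)
    {M : ℕ} (hM : (M : ℝ) = 2 * m) (s : ℝ) {τ z₁ : ℂ} (hτ : 0 < τ.im)
    (hz : ∀ a b : ℤ, z₁ ≠ (a : ℂ) + (b : ℂ) * τ) (z₂ : ℂ) :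
    PhiS sgn m s τ z₁ z₂ - mexp (2 * m * z₁) * PhiS sgn m s τ z₁ (z₂ + 2 * τ) =
      ∑ k ∈ Finset.range M,
        Complex.exp ((Real.pi : ℂ) * I * ((k : ℂ) + s) * (z₁ - z₂)) *
          mexp (τ * (-(((k : ℂ) + s) ^ 2 / (4 * m)))) *
          ThetaS sgn ((k : ℝ) + s) m τ (z₁ + z₂) := by
  simp only [PhiS_eq_tsum, ThetaS_eq_tsum, ← tsum_mul_left]
  rw [← (summable_phiNum_div hsgn hm s hτ z₁ z₂).tsum_sub
      ((summable_phiNum_div hsgn hm s hτ z₁ (z₂ + 2 * τ)).mul_left _),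
    ← Summable.tsum_finsetSum fun k _ => (summable_thetaTerm hsgn _ hm hτ _).mul_left _]
  refine tsum_congr fun n => ?_
  rw [phiNum_div_sub_mexp_mul_phiNum_div hM sgn s n (one_sub_mexp_ne_zero hz n)]
  exact Finset.sum_congr rfl fun k _ => phiNum_mul_mexp_pow hm.ne' sgn s τ z₁ z₂ k n

lemma mexp_mul_phiNum_sub_two_mul_add_two {sgn : ℂ} (hsgn : sgn ^ 2 = 1) (m s : ℝ) (τ z₁ z₂ : ℂ)
    (n : ℤ) :
    mexp (-(2 * m) * z₂) * phiNum sgn m s τ (z₁ - 2 * τ) z₂ (n + 2) =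
      mexp (2 * m * z₁) * phiNum sgn m s τ z₁ (z₂ + 2 * τ) n := by
  have hsgn0 : sgn ≠ 0 := by rintro rfl; simp at hsgn
  have hpow : sgn ^ (n + 2) = sgn ^ n := by
    rw [zpow_add₀ hsgn0, zpow_ofNat, hsgn, mul_one]
  rw [phiNum, phiNum, hpow, mul_left_comm, mul_left_comm (mexp _), ← mexp_add, ← mexp_add]
  push_cast
  ring_nf

lemma mexp_mul_PhiS_sub_two_mul {sgn : ℂ} (hsgn : sgn ^ 2 = 1) (m s : ℝ) (τ z₁ z₂ : ℂ) :
    mexp (-(2 * m) * z₂) * PhiS sgn m s τ (z₁ - 2 * τ) z₂ =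
      mexp (2 * m * z₁) * PhiS sgn m s τ z₁ (z₂ + 2 * τ) := by
  simp only [PhiS_eq_tsum, ← tsum_mul_left]
  rw [← (Equiv.addRight (2 : ℤ)).tsum_eq]
  refine tsum_congr fun n => ?_
  have hden : z₁ - 2 * τ + ((n + 2 : ℤ) : ℂ) * τ = z₁ + n * τ := by push_cast; ring
  rw [Equiv.coe_addRight, hden, ← mul_div_assoc, ← mul_div_assoc,
    mexp_mul_phiNum_sub_two_mul_add_two hsgn]

end MockTheta

end

/-- Here `m = m2/2`, `s = s2/2`, the sum over `k ∈ ℤ, 0 ≤ k < 2m` is a sum over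
`k ∈ Finset.range m2.toNat`, and `q^x = mexp (τ * x)`. -/
theorem stmt13 (m2 : ℤ) (hm2 : 0 < m2) (s2 : ℤ) (sgn : ℂ) (hsgn : sgn = 1 ∨ sgn = -1)
    (τ z₁ z₂ : ℂ) (hτ : 0 < τ.im) (hz : ∀ a b : ℤ, z₁ ≠ (a : ℂ) + (b : ℂ) * τ) :
    (PhiS sgn ((m2 : ℝ) / 2) ((s2 : ℝ) / 2) τ z₁ z₂ -
        mexp (2 * ((m2 : ℂ) / 2) * z₁) * PhiS sgn ((m2 : ℝ) / 2) ((s2 : ℝ) / 2) τ z₁ (z₂ + 2 * τ) =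
      ∑ k ∈ Finset.range m2.toNat,
        Complex.exp ((Real.pi : ℂ) * Complex.I * ((k : ℂ) + (s2 : ℂ) / 2) * (z₁ - z₂)) *
          mexp (τ * (-(((k : ℂ) + (s2 : ℂ) / 2) ^ 2 / (4 * ((m2 : ℂ) / 2))))) *
          ThetaS sgn ((k : ℝ) + (s2 : ℝ) / 2) ((m2 : ℝ) / 2) τ (z₁ + z₂)) ∧
    (PhiS sgn ((m2 : ℝ) / 2) ((s2 : ℝ) / 2) τ z₁ z₂ -
        mexp (-(2 * ((m2 : ℂ) / 2)) * z₂) * PhiS sgn ((m2 : ℝ) / 2) ((s2 : ℝ) / 2) τ (z₁ - 2 * τ) z₂ =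
      ∑ k ∈ Finset.range m2.toNat,
        Complex.exp ((Real.pi : ℂ) * Complex.I * ((k : ℂ) + (s2 : ℂ) / 2) * (z₁ - z₂)) *
          mexp (τ * (-(((k : ℂ) + (s2 : ℂ) / 2) ^ 2 / (4 * ((m2 : ℂ) / 2))))) *
          ThetaS sgn ((k : ℝ) + (s2 : ℝ) / 2) ((m2 : ℝ) / 2) τ (z₁ + z₂)) := by
  have hm : (0 : ℝ) < (m2 : ℝ) / 2 := by positivity
  have hM : ((m2.toNat : ℕ) : ℝ) = 2 * ((m2 : ℝ) / 2) := by
    rw [mul_div_cancel₀ _ two_ne_zero, ← Int.cast_natCast, Int.toNat_of_nonneg hm2.le]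
  have hsgn2 : sgn ^ 2 = 1 := by rcases hsgn with rfl | rfl <;> norm_num
  have hsgn0 : sgn ≠ 0 := by rintro rfl; simp at hsgn2
  have hA := MockTheta.PhiS_sub_mexp_mul_PhiS_add_two_mul hsgn0 hm hM ((s2 : ℝ) / 2) hτ hz z₂
  have hB := MockTheta.mexp_mul_PhiS_sub_two_mul hsgn2 ((m2 : ℝ) / 2) ((s2 : ℝ) / 2) τ z₁ z₂
  push_cast at hA hB
  exact ⟨hA, hB ▸ hA⟩
end
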